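/- The function Φ(ξ,w) = ∫_ξ^∞ ∫_{−1}^{1} Φ₀(η,w,z) dz dη extends to a continuous function on ℝ_{>0} × [−1,1]; in particular, for each fixed ξ > 0, the limit of Φ(ξ,w) as w → ±1 exists and equals 1 − (12/π²)ξ if ξ ≤ 1/2, and 1 + (6/π²)·(Ψ(2ξ) − log(2ξ) − 1) if ξ ≥ 1/2. -/

import Mathlib

open Real Set MeasureTheory Filter

noncomputable def Υ (x : ℝ) : ℝ := if x ≤ 0 then 0 else if x < 1 then x else 1

noncomputable def Φ₀ (ξ w z : ℝ) : ℝ :=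
  if w + z ≠ 0 then (6 / π ^ 2) * Υ (1 + (ξ⁻¹ - max |w| |z| - 1) / |w + z|)
  else if ξ⁻¹ < 1 + |w| then 0 else 6 / π ^ 2

noncomputable def Φ (ξ w : ℝ) : ℝ := ∫ η in Ioi ξ, ∫ z in (-1 : ℝ)..1, Φ₀ η w z

/-- The dilogarithm `Li₂(x) = ∑_{k≥1} x^k / k²`. -/
noncomputable def Li2 (x : ℝ) : ℝ := ∑' k : ℕ, x ^ (k + 1) / ((k : ℝ) + 1) ^ 2

noncomputable def Ψ (a : ℝ) : ℝ :=
  if a < 1 then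
    -Li2 a + (1 - a) * Real.log (a⁻¹ - 1) + Real.log a - (1 / 2) * (Real.log a) ^ 2 + π ^ 2 / 6
  else if a = 1 then 0
  else Li2 a⁻¹ - (a - 1) * Real.log (1 - a⁻¹) + Real.log a - π ^ 2 / 6

/-- The boundary value of `Φ(ξ, ·)` at `w = ±1`. -/
noncomputable def Φbd (ξ : ℝ) : ℝ :=
  if ξ ≤ 1 / 2 then 1 - 12 / π ^ 2 * ξ
  else 1 + 6 / π ^ 2 * (Ψ (2 * ξ) - Real.log (2 * ξ) - 1)

/-!
Write `Φ ξ w = ∫_ξ^∞ I(η, w) dη` with `I(η, w) = ∫_{-1}^1 Φ₀ η w z dz`. Since `0 ≤ Φ₀ ≤ 6/π²`,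
`Φ₀ ≤ (6/π²) η⁻¹`, and for `η > 1` `Φ₀` vanishes on `|z| ≤ 1 - η⁻¹`, we get
`I(η, w) ≤ (12/π²) η⁻²` uniformly in `w`. Off the null set `z = -w`, `Φ₀` is jointly
continuous in `(η, w)`, so by dominated convergence `I` and then `Φ` itself are continuous on
`ℝ_{>0} × ℝ`: `Φ` is its own extension, and it remains to compute `Φ ξ (±1)`.

At `w = 1` the substitution `y = 1 + z` gives `I(η, 1) = (6/π²) ∫_0^2 Υ(1 - (2 - η⁻¹)/y) dy`,
which is `12/π²` for `η ≤ 1/2` and `(12/π²)(x + (1 - x) log (1 - x))`, `x = 1/(2η)`, otherwise.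
The latter is `-(12/π²) Ψ₁'(2η)` for `Ψ₁ a = Li₂(a⁻¹) - (a - 1) log (1 - a⁻¹) - 1`, using
`Li₂'(x) = -log (1 - x)/x`, and `Ψ₁ → 0` at infinity. Finally `Φ₀ η (-w) (-z) = Φ₀ η w z`
turns `w = -1` into `w = 1`.
-/

open Topology

lemma Υ_eq_max_min (x : ℝ) : Υ x = max 0 (min 1 x) := by
  unfold Υ
  split_ifs with h₀ h₁
  · simp [(min_le_right 1 x).trans h₀]
  · rw [min_eq_right h₁.le, max_eq_right (not_le.1 h₀).le]
  · rw [min_eq_left (not_lt.1 h₁), max_eq_right zero_le_one]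

lemma continuous_Υ : Continuous Υ := by
  simp only [funext Υ_eq_max_min]
  fun_prop

lemma Υ_nonneg (x : ℝ) : 0 ≤ Υ x := by
  rw [Υ_eq_max_min]; exact le_max_left _ _

lemma Υ_le_one (x : ℝ) : Υ x ≤ 1 := by
  rw [Υ_eq_max_min]; exact max_le zero_le_one (min_le_left _ _)

lemma Υ_le_max_zero (x : ℝ) : Υ x ≤ max 0 x := by
  rw [Υ_eq_max_min]; exact max_le_max le_rfl (min_le_right _ _)

lemma Υ_of_nonpos {x : ℝ} (h : x ≤ 0) : Υ x = 0 := if_pos h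

lemma Υ_of_one_le {x : ℝ} (h : 1 ≤ x) : Υ x = 1 := by
  rw [Υ_eq_max_min, min_eq_left h, max_eq_right zero_le_one]

lemma Υ_of_mem_Icc {x : ℝ} (h : x ∈ Icc (0 : ℝ) 1) : Υ x = x := by
  rw [Υ_eq_max_min, min_eq_right h.2, max_eq_right h.1]

lemma Φ₀_nonneg (η w z : ℝ) : 0 ≤ Φ₀ η w z := by
  unfold Φ₀
  split_ifs
  · exact mul_nonneg (by positivity) (Υ_nonneg _)
  · exact le_rfl
  · positivity

lemma Φ₀_le (η w z : ℝ) : Φ₀ η w z ≤ 6 / π ^ 2 := by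
  unfold Φ₀
  split_ifs
  · exact mul_le_of_le_one_right (by positivity) (Υ_le_one _)
  · positivity
  · exact le_rfl

lemma measurable_Φ₀ (η w : ℝ) : Measurable (Φ₀ η w) := by
  have := continuous_Υ.measurable
  unfold Φ₀
  exact Measurable.ite (measurableSet_eq_fun (by fun_prop) measurable_const).compl
    (by fun_prop) measurable_const

lemma intervalIntegrable_Φ₀ (η w a b : ℝ) : IntervalIntegrable (Φ₀ η w) volume a b :=
  (intervalIntegrable_const (c := 6 / π ^ 2)).mono_fun'
    (measurable_Φ₀ η w).aestronglyMeasurable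
    (Eventually.of_forall fun z => (abs_of_nonneg (Φ₀_nonneg η w z)).trans_le (Φ₀_le η w z))

lemma Φ₀_neg_neg (η w z : ℝ) : Φ₀ η (-w) (-z) = Φ₀ η w z := by
  simp only [Φ₀, ← neg_add, neg_ne_zero, abs_neg]

lemma Φ₀_eq_zero {η w z : ℝ} (hη : η⁻¹ < 1) (hz : η⁻¹ + |z| ≤ 1) : Φ₀ η w z = 0 := by
  unfold Φ₀
  split_ifs with hwz h
  · have hs : 0 < |w + z| := abs_pos.2 hwz
    have : |w + z| ≤ max |w| |z| + |z| :=
      (abs_add_le w z).trans (add_le_add (le_max_left _ _) le_rfl)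
    refine mul_eq_zero_of_right _ (Υ_of_nonpos ?_)
    rw [one_add_div hs.ne']
    exact div_nonpos_of_nonpos_of_nonneg (by linarith) hs.le
  · rfl
  · linarith [abs_nonneg w]

lemma Φ₀_le_mul_inv {η w z : ℝ} (hη : 0 ≤ η) (hz : |z| ≤ 1) :
    Φ₀ η w z ≤ 6 / π ^ 2 * η⁻¹ := by
  have ht : 0 ≤ η⁻¹ := inv_nonneg.2 hη
  rcases le_or_gt 1 η⁻¹ with h1 | h1
  · exact (Φ₀_le η w z).trans (le_mul_of_one_le_right (by positivity) h1)
  unfold Φ₀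
  split_ifs with hwz h
  · refine mul_le_mul_of_nonneg_left ((Υ_le_max_zero _).trans (max_le ht ?_)) (by positivity)
    have hs : 0 < |w + z| := abs_pos.2 hwz
    have hsum : |w + z| ≤ max |w| |z| + 1 :=
      (abs_add_le w z).trans (add_le_add (le_max_left _ _) hz)
    rw [← sub_nonneg, show η⁻¹ - (1 + (η⁻¹ - max |w| |z| - 1) / |w + z|)
      = ((1 - η⁻¹) * (max |w| |z| + 1 - |w + z|) + η⁻¹ * max |w| |z|) / |w + z| by
        field_simp; ring]
    exact div_nonneg (add_nonneg (mul_nonneg (by linarith) (by linarith))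
      (mul_nonneg ht (le_max_of_le_left (abs_nonneg w)))) hs.le
  · positivity
  · linarith [abs_nonneg w]

lemma continuousAt_Φ₀ {η₀ w₀ z : ℝ} (hη : η₀ ≠ 0) (hz : w₀ + z ≠ 0) :
    ContinuousAt (fun p : ℝ × ℝ => Φ₀ p.1 p.2 z) (η₀, w₀) := by
  have hne : ∀ᶠ p : ℝ × ℝ in 𝓝 (η₀, w₀), p.2 + z ≠ 0 :=
    (continuous_snd.add continuous_const).continuousAt.eventually_ne hz
  refine ContinuousAt.congr (f := fun p : ℝ × ℝ =>
    6 / π ^ 2 * Υ (1 + (p.1⁻¹ - max |p.2| |z| - 1) / |p.2 + z|)) ?_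
    (hne.mono fun p hp => (if_pos hp).symm)
  have := continuous_Υ
  fun_prop (disch := simp_all)

noncomputable def Φinner (η w : ℝ) : ℝ := ∫ z in (-1 : ℝ)..1, Φ₀ η w z

lemma Φ_eq_integral_Φinner (ξ w : ℝ) : Φ ξ w = ∫ η in Ioi ξ, Φinner η w := rfl

lemma Φinner_nonneg (η w : ℝ) : 0 ≤ Φinner η w :=
  intervalIntegral.integral_nonneg (by norm_num) fun z _ => Φ₀_nonneg η w z

lemma Φinner_le (η w : ℝ) : Φinner η w ≤ 12 / π ^ 2 := by
  calc Φinner η w ≤ ∫ _ in (-1 : ℝ)..1, 6 / π ^ 2 :=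
        intervalIntegral.integral_mono_on (by norm_num) (intervalIntegrable_Φ₀ η w _ _)
          intervalIntegrable_const fun z _ => Φ₀_le η w z
    _ = 12 / π ^ 2 := by norm_num

lemma Φinner_neg (η w : ℝ) : Φinner η (-w) = Φinner η w := by
  simpa [Φinner, Φ₀_neg_neg] using
    (intervalIntegral.integral_comp_neg (a := -1) (b := 1) fun z => Φ₀ η (-w) z).symm

lemma Φinner_le_of_one_lt {η : ℝ} (w : ℝ) (hη : 1 < η) : Φinner η w ≤ 12 / π ^ 2 * η⁻¹ ^ 2 := by
  have ht : 0 < η⁻¹ := inv_pos.2 (by linarith)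
  have ht1 : η⁻¹ < 1 := inv_lt_one_of_one_lt₀ hη
  set c := 1 - η⁻¹ with hc
  have hI := intervalIntegrable_Φ₀ η w
  have hend : ∀ a b, -1 ≤ a → b ≤ 1 → b - a = η⁻¹ →
      ∫ z in a..b, Φ₀ η w z ≤ 6 / π ^ 2 * η⁻¹ ^ 2 := by
    intro a b ha hb hlen
    have hab : a ≤ b := by linarith
    have hz : ∀ z ∈ Icc a b, |z| ≤ 1 := fun z hz => abs_le.2 ⟨ha.trans hz.1, hz.2.trans hb⟩
    calc ∫ z in a..b, Φ₀ η w z ≤ ∫ _ in a..b, 6 / π ^ 2 * η⁻¹ :=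
          intervalIntegral.integral_mono_on hab (hI a b) intervalIntegrable_const
            fun z hz' => Φ₀_le_mul_inv (by linarith) (hz z hz')
      _ = 6 / π ^ 2 * η⁻¹ ^ 2 := by rw [intervalIntegral.integral_const, hlen, smul_eq_mul]; ring
  have hmid : ∫ z in -c..c, Φ₀ η w z = 0 := by
    rw [intervalIntegral.integral_congr (g := fun _ => 0), intervalIntegral.integral_zero]
    intro z hz
    rw [uIcc_of_le (by linarith)] at hz
    refine Φ₀_eq_zero ht1 ?_
    linarith [abs_le.2 hz]
  rw [Φinner, ← intervalIntegral.integral_add_adjacent_intervals (hI _ (-c)) (hI _ _),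
    ← intervalIntegral.integral_add_adjacent_intervals (hI (-c) c) (hI _ _), hmid, zero_add]
  exact (add_le_add (hend (-1) (-c) le_rfl (by linarith) (by rw [hc]; ring))
    (hend c 1 (by linarith) le_rfl (by rw [hc]; ring))).trans_eq (by ring)

lemma Φinner_le_inv_sq {η : ℝ} (w : ℝ) (hη : 0 < η) : Φinner η w ≤ 12 / π ^ 2 * η⁻¹ ^ 2 := by
  rcases le_or_gt η 1 with h | h
  · exact (Φinner_le η w).trans (le_mul_of_one_le_right (by positivity)
      (one_le_pow₀ ((one_le_inv₀ hη).2 h)))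
  · exact Φinner_le_of_one_lt w h

lemma continuousAt_Φinner {η₀ : ℝ} (w₀ : ℝ) (hη : η₀ ≠ 0) :
    ContinuousAt (fun p : ℝ × ℝ => Φinner p.1 p.2) (η₀, w₀) := by
  refine intervalIntegral.continuousAt_of_dominated_interval (bound := fun _ => 6 / π ^ 2)
    (Eventually.of_forall fun p => (measurable_Φ₀ p.1 p.2).aestronglyMeasurable)
    (Eventually.of_forall fun p => Eventually.of_forall fun z _ =>
      (abs_of_nonneg (Φ₀_nonneg _ _ z)).trans_le (Φ₀_le _ _ z))
    intervalIntegrable_const ?_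
  filter_upwards [volume.ae_ne (-w₀)] with z hz _
  exact continuousAt_Φ₀ hη fun h => hz (by linarith)

lemma norm_Φinner_le_rpow {η : ℝ} (w : ℝ) (hη : 0 < η) :
    ‖Φinner η w‖ ≤ 12 / π ^ 2 * η ^ (-2 : ℝ) := by
  rw [Real.norm_of_nonneg (Φinner_nonneg η w), Real.rpow_neg hη.le, Real.rpow_two, ← inv_pow]
  exact Φinner_le_inv_sq w hη

lemma continuousOn_Φinner (w : ℝ) : ContinuousOn (Φinner · w) (Ioi 0) := fun η hη =>
  ((continuousAt_Φinner w (ne_of_gt hη)).comp (f := fun η : ℝ => (η, w))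
    (by fun_prop)).continuousWithinAt

lemma integrableOn_Φinner {a : ℝ} (w : ℝ) (ha : 0 < a) : IntegrableOn (Φinner · w) (Ioi a) :=
  ((integrableOn_Ioi_rpow_of_lt (by norm_num) ha).const_mul (12 / π ^ 2)).mono'
    (((continuousOn_Φinner w).mono (Ioi_subset_Ioi ha.le)).aestronglyMeasurable measurableSet_Ioi)
    ((ae_restrict_iff' measurableSet_Ioi).2 (Eventually.of_forall fun _ hη =>
      norm_Φinner_le_rpow w (ha.trans hη)))

lemma continuousAt_integral_Ioi_fst {X : Type*} [TopologicalSpace X] [FirstCountableTopology X]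
    {F : ℝ → X → ℝ} {g : ℝ → ℝ} {a ξ₀ : ℝ} {x₀ : X} (ha : a < ξ₀)
    (hF_meas : ∀ x, AEStronglyMeasurable (F · x) (volume.restrict (Ioi a)))
    (hF_le : ∀ x, ∀ η ∈ Ioi a, ‖F η x‖ ≤ g η) (hg : IntegrableOn g (Ioi a))
    (hF_cont : ∀ η ∈ Ioi a, ContinuousAt (F η) x₀) :
    ContinuousAt (fun p : ℝ × X => ∫ η in Ioi p.1, F η p.2) (ξ₀, x₀) := by
  have hgt : ∀ {b : ℝ}, b < ξ₀ → ∀ᶠ p : ℝ × X in 𝓝 (ξ₀, x₀), b < p.1 :=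
    fun h => continuous_fst.continuousAt.eventually (lt_mem_nhds h)
  have hlt : ∀ {b : ℝ}, ξ₀ < b → ∀ᶠ p : ℝ × X in 𝓝 (ξ₀, x₀), p.1 < b :=
    fun h => continuous_fst.continuousAt.eventually (gt_mem_nhds h)
  have key : ContinuousAt (fun p : ℝ × X => ∫ η in Ioi a, (Ioi p.1).indicator (F · p.2) η)
      (ξ₀, x₀) := by
    refine continuousAt_of_dominated
      (Eventually.of_forall fun p => (hF_meas p.2).indicator measurableSet_Ioi)
      (Eventually.of_forall fun p => (ae_restrict_iff' measurableSet_Ioi).2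
        (Eventually.of_forall fun η hη => (norm_indicator_le_norm_self _ _).trans (hF_le p.2 η hη)))
      hg ?_
    filter_upwards [ae_restrict_mem measurableSet_Ioi, ae_restrict_of_ae (volume.ae_ne ξ₀)]
      with η hη hne
    rcases hne.lt_or_gt with hηξ | hξη
    · refine (continuousAt_const (y := 0)).congr ?_
      filter_upwards [hgt hηξ] with p hp
      exact (indicator_of_notMem (notMem_Ioi.2 hp.le) _).symm
    · refine ((hF_cont η hη).comp continuousAt_snd).congr ?_
      filter_upwards [hlt hξη] with p hp
      exact (indicator_of_mem (mem_Ioi.2 hp) (F · p.2)).symm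
  refine key.congr ?_
  filter_upwards [hgt ha] with p hp
  rw [setIntegral_indicator measurableSet_Ioi, Ioi_inter_Ioi, sup_eq_right.2 hp.le]

lemma continuousAt_Φ {ξ₀ : ℝ} (w₀ : ℝ) (hξ : 0 < ξ₀) :
    ContinuousAt (fun p : ℝ × ℝ => Φ p.1 p.2) (ξ₀, w₀) :=
  have ha : 0 < ξ₀ / 2 := half_pos hξ
  continuousAt_integral_Ioi_fst (half_lt_self hξ)
    (fun w => (integrableOn_Φinner w ha).aestronglyMeasurable)
    (fun w η hη => norm_Φinner_le_rpow w (ha.trans hη))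
    ((integrableOn_Ioi_rpow_of_lt (by norm_num) ha).const_mul _)
    fun η hη => (continuousAt_Φinner w₀ (ha.trans hη).ne').comp (f := fun w : ℝ => (η, w))
      (by fun_prop)

lemma summable_inv_succ_sq : Summable fun k : ℕ => 1 / ((k : ℝ) + 1) ^ 2 := by
  simpa using (summable_nat_add_iff 1).2 (Real.summable_one_div_nat_pow.2 one_lt_two)

lemma continuousOn_Li2 : ContinuousOn Li2 (Icc (-1) 1) := by
  refine continuousOn_tsum (fun k => by fun_prop) summable_inv_succ_sq fun k x hx => ?_
  rw [norm_div, norm_pow, Real.norm_of_nonneg (by positivity : (0 : ℝ) ≤ ((k : ℝ) + 1) ^ 2)]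
  gcongr
  exact pow_le_one₀ (norm_nonneg x) (abs_le.2 hx)

lemma Li2_zero : Li2 0 = 0 := by
  simp [Li2]

lemma Li2_one : Li2 1 = π ^ 2 / 6 := by
  simpa [Li2] using ((hasSum_nat_add_iff' 1).2 hasSum_zeta_two).tsum_eq

lemma hasDerivAt_Li2 {x : ℝ} (hx : |x| < 1) (hx0 : x ≠ 0) :
    HasDerivAt Li2 (-log (1 - x) / x) x := by
  obtain ⟨r, hxr, hr⟩ := exists_between hx
  have hderiv := hasDerivAt_tsum_of_isPreconnected (t := Ioo (-r) r) (y₀ := 0)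
    (u := fun k : ℕ => r ^ k) (g := fun k (y : ℝ) => y ^ (k + 1) / ((k : ℝ) + 1) ^ 2)
    (g' := fun k (y : ℝ) => y ^ k / ((k : ℝ) + 1))
    (summable_geometric_of_lt_one ((abs_nonneg x).trans hxr.le) hr) isOpen_Ioo
    isPreconnected_Ioo (fun k y _ => ?_) (fun k y hy => ?_)
    ⟨by linarith [abs_nonneg x], by linarith [abs_nonneg x]⟩ (by simp) (abs_lt.1 hxr)
  · have hsum : ∑' k : ℕ, x ^ k / ((k : ℝ) + 1) = -log (1 - x) / x := by
      refine (((Real.hasSum_pow_div_log_of_abs_lt_one hx).div_const x).congr_fun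
        fun k => ?_).tsum_eq
      field_simp
      ring
    exact hsum ▸ hderiv
  · refine ((hasDerivAt_pow (k + 1) y).div_const (((k : ℝ) + 1) ^ 2)).congr_deriv ?_
    rw [Nat.add_sub_cancel]
    push_cast
    field_simp
  · have hr0 : 0 < r := (abs_nonneg x).trans_lt hxr
    rw [norm_div, norm_pow, Real.norm_of_nonneg (by positivity : (0 : ℝ) ≤ (k : ℝ) + 1)]
    refine div_le_of_le_mul₀ (by positivity) (by positivity) ?_
    calc ‖y‖ ^ k ≤ r ^ k := pow_le_pow_left₀ (norm_nonneg y) (abs_lt.2 hy).le k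
      _ ≤ r ^ k * ((k : ℝ) + 1) :=
        le_mul_of_one_le_right (by positivity) (le_add_of_nonneg_left k.cast_nonneg)

lemma intervalIntegrable_Υ_comp {f : ℝ → ℝ} (hf : Measurable f) (a b : ℝ) :
    IntervalIntegrable (fun y => Υ (f y)) volume a b :=
  (intervalIntegrable_const (c := (1 : ℝ))).mono_fun'
    (continuous_Υ.measurable.comp hf).aestronglyMeasurable
    (Eventually.of_forall fun _ => (abs_of_nonneg (Υ_nonneg _)).trans_le (Υ_le_one _))

lemma integral_Υ_one_sub_div {s b : ℝ} (hs : 0 < s) (hsb : s ≤ b) :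
    ∫ y in (0 : ℝ)..b, Υ (1 - s / y) = b - s - s * log (b / s) := by
  have hI := intervalIntegrable_Υ_comp (f := fun y => 1 - s / y) (by fun_prop)
  have hzero : ∫ y in (0 : ℝ)..s, Υ (1 - s / y) = 0 := by
    rw [intervalIntegral.integral_congr_ae (g := fun _ => 0), intervalIntegral.integral_zero]
    refine Eventually.of_forall fun y hy => Υ_of_nonpos ?_
    rw [uIoc_of_le hs.le] at hy
    linarith [(one_le_div hy.1).2 hy.2]
  have hlin : EqOn (fun y => Υ (1 - s / y)) (fun y => 1 - s * y⁻¹) (uIcc s b) := by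
    intro y hy
    rw [uIcc_of_le hsb] at hy
    have hy0 : 0 < y := hs.trans_le hy.1
    dsimp only
    rw [Υ_of_mem_Icc ⟨by linarith [(div_le_one hy0).2 hy.1], by linarith [div_pos hs hy0]⟩,
      div_eq_mul_inv]
  have hinv : IntervalIntegrable (fun y : ℝ => y⁻¹) volume s b :=
    intervalIntegral.intervalIntegrable_inv (fun y hy => by
      rw [uIcc_of_le hsb] at hy; exact (hs.trans_le hy.1).ne') continuousOn_id
  rw [← intervalIntegral.integral_add_adjacent_intervals (hI 0 s) (hI s b), hzero, zero_add,
    intervalIntegral.integral_congr hlin, intervalIntegral.integral_sub intervalIntegrable_const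
      (hinv.const_mul s), intervalIntegral.integral_const_mul,
    integral_inv_of_pos hs (hs.trans_le hsb), intervalIntegral.integral_const, smul_eq_mul, mul_one]

lemma Φinner_one_eq (η : ℝ) :
    Φinner η 1 = 6 / π ^ 2 * ∫ y in (0 : ℝ)..2, Υ (1 - (2 - η⁻¹) / y) := by
  have h := intervalIntegral.integral_comp_add_left (a := -1) (b := 1)
    (fun y => Υ (1 - (2 - η⁻¹) / y)) 1
  norm_num at h
  rw [← h, ← intervalIntegral.integral_const_mul, Φinner]
  refine intervalIntegral.integral_congr_ae (Eventually.of_forall fun z hz => ?_)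
  rw [uIoc_of_le (by norm_num)] at hz
  have hz0 : 0 < 1 + z := by linarith [hz.1]
  rw [Φ₀, if_pos hz0.ne', abs_one, max_eq_left (abs_le.2 ⟨hz.1.le, hz.2⟩), abs_of_pos hz0]
  congr 2
  ring

lemma Φinner_one_of_le_half {η : ℝ} (hη : 0 < η) (h : η ≤ 1 / 2) : Φinner η 1 = 12 / π ^ 2 := by
  have hs : 2 - η⁻¹ ≤ 0 := by
    rw [sub_nonpos, le_inv_comm₀ two_pos hη]; linarith
  rw [Φinner_one_eq, intervalIntegral.integral_congr_ae (g := fun _ => 1)]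
  · norm_num; ring
  refine Eventually.of_forall fun y hy => Υ_of_one_le ?_
  rw [uIoc_of_le zero_le_two] at hy
  linarith [div_nonpos_of_nonpos_of_nonneg hs hy.1.le]

lemma Φinner_one_of_half_lt {η : ℝ} (h : 1 / 2 < η) :
    Φinner η 1 = 12 / π ^ 2 * ((2 * η)⁻¹ + (1 - (2 * η)⁻¹) * log (1 - (2 * η)⁻¹)) := by
  have hη : 0 < η := by linarith
  have hs : 0 < 2 - η⁻¹ := by
    rw [sub_pos, inv_lt_comm₀ hη two_pos]; linarith
  rw [Φinner_one_eq, integral_Υ_one_sub_div hs (by linarith [inv_pos.2 hη]),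
    show 1 - (2 * η)⁻¹ = (2 / (2 - η⁻¹))⁻¹ by field_simp, log_inv]
  field_simp
  ring

lemma inv_mem_Icc_of_one_le {a : ℝ} (ha : 1 ≤ a) : a⁻¹ ∈ Icc (-1 : ℝ) 1 :=
  ⟨by linarith [inv_nonneg.2 (zero_le_one.trans ha)], inv_le_one_of_one_le₀ ha⟩

/-- For `a ≥ 1` this is `Ψ a - log a - 1 + π² / 6`. -/
noncomputable def Ψ₁ (a : ℝ) : ℝ := Li2 a⁻¹ - (a - 1) * log (1 - a⁻¹) - 1

lemma Ψ₁_one : Ψ₁ 1 = π ^ 2 / 6 - 1 := by simp [Ψ₁, Li2_one]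

lemma Φbd_eq_Ψ₁ {ξ : ℝ} (h : 1 / 2 ≤ ξ) : Φbd ξ = 6 / π ^ 2 * Ψ₁ (2 * ξ) := by
  rcases h.eq_or_lt with rfl | h
  · rw [Φbd, if_pos le_rfl, show 2 * (1 / 2 : ℝ) = 1 by norm_num, Ψ₁_one]
    field_simp
    ring
  · have h1 : 1 < 2 * ξ := by linarith
    rw [Φbd, if_neg (not_le.2 h), Ψ, if_neg (not_lt.2 h1.le), if_neg h1.ne', Ψ₁]
    field_simp
    ring

lemma hasDerivAt_Ψ₁ {a : ℝ} (ha : 1 < a) :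
    HasDerivAt Ψ₁ (-(a⁻¹ + (1 - a⁻¹) * log (1 - a⁻¹))) a := by
  have ha0 : 0 < a := by linarith
  have hx : a⁻¹ < 1 := inv_lt_one_of_one_lt₀ ha
  have hx0 : 0 < a⁻¹ := inv_pos.2 ha0
  have hLi := (hasDerivAt_Li2 (by rw [abs_of_pos hx0]; exact hx) hx0.ne').comp a
    (hasDerivAt_inv ha0.ne')
  have hlog := ((hasDerivAt_inv ha0.ne').const_sub 1).log (by linarith)
  refine ((hLi.sub (((hasDerivAt_id a).sub_const 1).mul hlog)).sub_const 1).congr_deriv ?_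
  have ha1 : a - 1 ≠ 0 := by linarith
  rw [id, show (1 : ℝ) - a⁻¹ = (a - 1) / a by field_simp]
  field_simp
  ring

lemma continuousWithinAt_Ψ₁_one : ContinuousWithinAt Ψ₁ (Ici 1) 1 := by
  have hLi : ContinuousWithinAt (fun a : ℝ => Li2 a⁻¹) (Ici 1) 1 :=
    (continuousOn_Li2 1 ⟨by norm_num, le_rfl⟩).comp_of_eq
      (continuousAt_inv₀ one_ne_zero).continuousWithinAt (fun _ => inv_mem_Icc_of_one_le) inv_one
  -- `u log u` is continuous at `u = 0`
  have hmul : (fun a : ℝ => (a - 1) * log (1 - a⁻¹)) =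
      fun a => a * ((1 - a⁻¹) * log (1 - a⁻¹)) := by
    funext a
    rcases eq_or_ne a 0 with rfl | ha
    · simp
    · rw [← mul_assoc, mul_sub, mul_one, mul_inv_cancel₀ ha]
  have hlog : ContinuousAt (fun a : ℝ => (a - 1) * log (1 - a⁻¹)) 1 := by
    rw [hmul]
    exact continuousAt_id.mul (Real.continuous_mul_log.continuousAt.comp
      (continuousAt_const.sub (continuousAt_inv₀ one_ne_zero)))
  exact (hLi.sub hlog.continuousWithinAt).sub continuousWithinAt_const

lemma continuousOn_Ψ₁ : ContinuousOn Ψ₁ (Ici 1) := by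
  intro a ha
  rcases (mem_Ici.1 ha).eq_or_lt with rfl | ha
  · exact continuousWithinAt_Ψ₁_one
  · exact (hasDerivAt_Ψ₁ ha).continuousAt.continuousWithinAt

lemma tendsto_Ψ₁_atTop : Tendsto Ψ₁ atTop (𝓝 0) := by
  have hinv : Tendsto (fun a : ℝ => a⁻¹) atTop (𝓝[Icc (-1) 1] 0) :=
    tendsto_nhdsWithin_iff.2 ⟨tendsto_inv_atTop_zero,
      (eventually_ge_atTop 1).mono fun _ => inv_mem_Icc_of_one_le⟩
  have hLi : Tendsto (fun a : ℝ => Li2 a⁻¹) atTop (𝓝 0) :=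
    Li2_zero ▸ (continuousOn_Li2 0 ⟨by norm_num, by norm_num⟩).tendsto.comp hinv
  have hlog : Tendsto (fun a : ℝ => log (1 - a⁻¹)) atTop (𝓝 0) := by
    have h1 : Tendsto (fun a : ℝ => 1 - a⁻¹) atTop (𝓝 1) := by
      simpa using tendsto_inv_atTop_zero.const_sub (1 : ℝ)
    have h := (continuousAt_log one_ne_zero).tendsto.comp h1
    rwa [log_one] at h
  have h := (hLi.sub ((tendsto_mul_log_one_add_div_atTop (-1)).sub hlog)).sub_const 1
  norm_num at h
  refine h.congr fun a => ?_
  simp only [Ψ₁]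
  ring_nf

lemma integral_Φinner_one_Ioi {ξ : ℝ} (h : 1 / 2 ≤ ξ) :
    ∫ η in Ioi ξ, Φinner η 1 = 6 / π ^ 2 * Ψ₁ (2 * ξ) := by
  have hcont : ContinuousWithinAt (fun η => -(6 / π ^ 2 * Ψ₁ (2 * η))) (Ici ξ) ξ :=
    ((continuousOn_Ψ₁ (2 * ξ) (by rw [mem_Ici]; linarith)).comp (by fun_prop)
      fun η (hη : ξ ≤ η) => by rw [mem_Ici]; linarith).const_mul _ |>.neg
  have hderiv : ∀ η ∈ Ioi ξ,
      HasDerivAt (fun η => -(6 / π ^ 2 * Ψ₁ (2 * η))) (Φinner η 1) η := by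
    intro η hη
    have hη : 1 / 2 < η := h.trans_lt hη
    refine (((hasDerivAt_Ψ₁ (by rw [id]; linarith)).comp η
      ((hasDerivAt_id η).const_mul 2)).const_mul (6 / π ^ 2)).neg.congr_deriv ?_
    rw [Φinner_one_of_half_lt hη]
    simp only [id]
    ring
  have htend : Tendsto (fun η => -(6 / π ^ 2 * Ψ₁ (2 * η))) atTop (𝓝 0) := by
    simpa using ((tendsto_Ψ₁_atTop.comp (tendsto_id.const_mul_atTop two_pos)).const_mul
      (6 / π ^ 2)).neg
  rw [integral_Ioi_of_hasDerivAt_of_tendsto hcont hderiv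
    (integrableOn_Φinner 1 (by linarith)) htend]
  ring

lemma Φ_one {ξ : ℝ} (hξ : 0 < ξ) : Φ ξ 1 = Φbd ξ := by
  rcases le_or_gt (1 / 2) ξ with h | h
  · rw [Φ_eq_integral_Φinner, integral_Φinner_one_Ioi h, Φbd_eq_Ψ₁ h]
  have hconst : EqOn (Φinner · 1) (fun _ => 12 / π ^ 2) (uIcc ξ (1 / 2)) := fun η hη => by
    rw [uIcc_of_le h.le] at hη
    exact Φinner_one_of_le_half (hξ.trans_le hη.1) hη.2
  rw [Φ_eq_integral_Φinner, ← intervalIntegral.integral_interval_add_Ioi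
    (integrableOn_Φinner 1 hξ) (integrableOn_Φinner 1 one_half_pos),
    intervalIntegral.integral_congr hconst, integral_Φinner_one_Ioi le_rfl,
    intervalIntegral.integral_const, smul_eq_mul, Φbd, if_pos h.le,
    show 2 * (1 / 2 : ℝ) = 1 by norm_num, Ψ₁_one]
  field_simp
  ring

lemma Φ_neg (ξ w : ℝ) : Φ ξ (-w) = Φ ξ w := by
  simp only [Φ_eq_integral_Φinner, Φinner_neg]

lemma continuous_Φ {ξ : ℝ} (hξ : 0 < ξ) : Continuous (Φ ξ) :=
  continuous_iff_continuousAt.2 fun w =>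
    (continuousAt_Φ w hξ).comp (f := fun w : ℝ => (ξ, w)) (by fun_prop)

/-- `Φ` extends continuously to `ℝ_{>0} × [−1,1]`; in particular, for each fixed
`ξ > 0`, `Φ(ξ,w)` tends to `Φbd ξ` as `w → ±1` from inside `(−1,1)`. -/
theorem stmt12 :
    (∃ Φe : ℝ × ℝ → ℝ,
      ContinuousOn Φe (Ioi (0 : ℝ) ×ˢ Icc (-1 : ℝ) 1) ∧
      (∀ ξ ∈ Ioi (0 : ℝ), ∀ w ∈ Ioo (-1 : ℝ) 1, Φe (ξ, w) = Φ ξ w) ∧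
      (∀ ξ ∈ Ioi (0 : ℝ), Φe (ξ, 1) = Φbd ξ ∧ Φe (ξ, -1) = Φbd ξ)) ∧
    ∀ ξ : ℝ, 0 < ξ →
      Tendsto (fun w => Φ ξ w) (nhdsWithin 1 (Ioo (-1 : ℝ) 1)) (nhds (Φbd ξ)) ∧
      Tendsto (fun w => Φ ξ w) (nhdsWithin (-1) (Ioo (-1 : ℝ) 1)) (nhds (Φbd ξ)) := by
  have hbd : ∀ ξ : ℝ, 0 < ξ → Φ ξ 1 = Φbd ξ ∧ Φ ξ (-1) = Φbd ξ := fun ξ hξ =>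
    ⟨Φ_one hξ, (Φ_neg ξ 1).trans (Φ_one hξ)⟩
  refine ⟨⟨fun p => Φ p.1 p.2, fun p hp => (continuousAt_Φ p.2 hp.1).continuousWithinAt,
    fun _ _ _ _ => rfl, hbd⟩, fun ξ hξ => ⟨?_, ?_⟩⟩
  · exact (hbd ξ hξ).1 ▸ ((continuous_Φ hξ).tendsto 1).mono_left nhdsWithin_le_nhds
  · exact (hbd ξ hξ).2 ▸ ((continuous_Φ hξ).tendsto (-1)).mono_left nhdsWithin_le_nhds
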